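/- arXiv:2012.04106 — 2 statements merged into one kernel-verified Lean document; each statement's English description precedes it below -/
import Mathlib

section
/- For every subgroup N of the group ⟨g⟩ ≅ C_n of group-like elements of the Taft algebra T_n(q), the linear map λ_N^0 : T_n(q) → k given on the canonical basis by λ_N^0(g^i x^j) = 1 if j = 0 and g^i ∈ N, and λ_N^0(g^i x^j) = 0 otherwise, is a partial action of T_n(q) on k. (Proposition 3.1.5) -/
open scoped TensorProduct

/-- The Gaussian binomial coefficient `binom(m, ℓ)_q` in a field `k`, defined by
`binom(0,0)_q = 1`, `binom(m,ℓ)_q = 0` for `ℓ < 0` or `ℓ > m`, and the q-Pascal rule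
`binom(i,s)_q = binom(i-1,s-1)_q + q^s · binom(i-1,s)_q` for `i ≥ 1`. -/
def qbinom {k : Type*} [Field k] (q : k) : ℕ → ℤ → k
  | 0, s => if s = 0 then 1 else 0
  | (i + 1), s => qbinom q i (s - 1) + q ^ s.toNat * qbinom q i s

/-- The q-number `(m)_q = 1 + q + ⋯ + q^{m−1}`. -/
def qnum {k : Type*} [Field k] (q : k) (m : ℕ) : k := ∑ l ∈ Finset.range m, q ^ l

/-- The q-factorial `(m)_q! = (m)_q (m−1)_q ⋯ (1)_q`, with `(0)_q! = 1`. -/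
def qfact {k : Type*} [Field k] (q : k) : ℕ → k
  | 0 => 1
  | (m + 1) => qnum q (m + 1) * qfact q m

/-- The linear map `h ↦ Σ λ(h₁) h₂` (Sweedler notation). -/
noncomputable def lCont (k H : Type*) [CommSemiring k] [Semiring H] [Bialgebra k H]
    (lam : H →ₗ[k] k) : H →ₗ[k] H :=
  (TensorProduct.lid k H).toLinearMap ∘ₗ TensorProduct.map lam LinearMap.id ∘ₗ Coalgebra.comul

/-- The linear map `h ↦ Σ h₁ λ(h₂)` (Sweedler notation). -/
noncomputable def rCont (k H : Type*) [CommSemiring k] [Semiring H] [Bialgebra k H]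
    (lam : H →ₗ[k] k) : H →ₗ[k] H :=
  (TensorProduct.rid k H).toLinearMap ∘ₗ TensorProduct.map LinearMap.id lam ∘ₗ Coalgebra.comul

/-- A partial action of a bialgebra `H` on its base field `k`: a linear map `λ : H → k` with
`λ(1) = 1` and `λ(h)λ(y) = Σ λ(h₁)λ(h₂y)` for all `h, y ∈ H`; by linearity the right-hand side
is `λ((Σ λ(h₁) h₂) · y)`. -/
def IsPartialAction (k H : Type*) [CommSemiring k] [Semiring H] [Bialgebra k H]
    (lam : H →ₗ[k] k) : Prop :=
  lam 1 = 1 ∧ ∀ h y : H, lam h * lam y = lam (lCont k H lam h * y)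

/-- A symmetric partial action additionally satisfies `λ(h)λ(y) = Σ λ(h₁y)λ(h₂)`, i.e.
`λ(h)λ(y) = λ((Σ h₁ λ(h₂)) · y)`. -/
def IsSymmPartialAction (k H : Type*) [CommSemiring k] [Semiring H] [Bialgebra k H]
    (lam : H →ₗ[k] k) : Prop :=
  IsPartialAction k H lam ∧ ∀ h y : H, lam h * lam y = lam (rCont k H lam h * y)

/-- A realization of the Taft algebra `T_n(q)`: a Hopf algebra `H` over `k` with generators
`g, x` satisfying `g^n = 1`, `x^n = 0`, `xg = q·gx`, such that `{g^i x^j : 0 ≤ i,j ≤ n−1}` is a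
`k`-basis, `g` is group-like and `x` is `(1,g)`-primitive. -/
structure TaftData (k : Type*) [Field k] (n : ℕ) (q : k) (H : Type*)
    [Ring H] [HopfAlgebra k H] where
  g : H
  x : H
  g_pow_n : g ^ n = 1
  x_pow_n : x ^ n = 0
  x_mul_g : x * g = q • (g * x)
  basis : Module.Basis (Fin n × Fin n) k H
  basis_eq : ∀ i j : Fin n, basis (i, j) = g ^ (i : ℕ) * x ^ (j : ℕ)
  comul_g : Coalgebra.comul (R := k) g = g ⊗ₜ[k] g
  comul_x : Coalgebra.comul (R := k) x = x ⊗ₜ[k] (1 : H) + g ⊗ₜ[k] x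
  counit_g : Coalgebra.counit (R := k) g = 1
  counit_x : Coalgebra.counit (R := k) x = 0


/-! Since `Δ x = x ⊗ 1 + g ⊗ x` and `λ` vanishes on `H x`, in `Σ λ(h₁) h₂` for `h = gⁱ xʲ` only
the term `g^(i+j) ⊗ gⁱ xʲ` survives, so `Σ λ(h₁) h₂ = λ(g^(i+j)) gⁱ xʲ`. On basis elements
`h = gⁱ xʲ`, `y = gˢ xᵗ` the partial-action identity thus reads
`[j = 0 ∧ a ∣ i] [t = 0 ∧ a ∣ s] = [a ∣ i + j] q^(js) [j + t = 0 ∧ a ∣ i + s]`,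
which holds because `a ∣ i` gives `a ∣ s ↔ a ∣ i + s`. -/

section lCont

variable {k H : Type*} [CommSemiring k] [Semiring H] [Bialgebra k H]

lemma lid_map_mul_tmul (μ : H →ₗ[k] k) (t : H ⊗[k] H) (a b : H) :
    TensorProduct.lid k H (TensorProduct.map μ LinearMap.id (t * (a ⊗ₜ[k] b))) =
      TensorProduct.lid k H
        (TensorProduct.map (μ ∘ₗ LinearMap.mulRight k a) LinearMap.id t) * b := by
  induction t using TensorProduct.induction_on with
  | zero => simp
  | tmul u v => simp
  | add t t' ht ht' => simp [add_mul, ht, ht']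

lemma lCont_mul_of_comul_eq {μ : H →ₗ[k] k} {g x : H}
    (hx : Coalgebra.comul (R := k) x = x ⊗ₜ[k] (1 : H) + g ⊗ₜ[k] x)
    (hμ : ∀ u, μ (u * x) = 0) (h : H) :
    lCont k H μ (h * x) = lCont k H (μ ∘ₗ LinearMap.mulRight k g) h * x := by
  have hμx : μ ∘ₗ LinearMap.mulRight k x = 0 := LinearMap.ext hμ
  simp only [lCont, LinearMap.coe_comp, LinearEquiv.coe_coe, Function.comp_apply,
    Bialgebra.comul_mul, hx, mul_add, map_add, lid_map_mul_tmul, hμx]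
  simp

lemma lCont_of_isGroupLikeElem (μ : H →ₗ[k] k) {g : H} (hg : IsGroupLikeElem k g) :
    lCont k H μ g = μ g • g := by
  simp [lCont, hg.comul_eq_tmul_self]

lemma IsPartialAction.of_basis {ι : Type*} (b : Module.Basis ι k H) {lam : H →ₗ[k] k}
    (h_one : lam 1 = 1)
    (h_basis : ∀ i j, lam (b i) * lam (b j) = lam (lCont k H lam (b i) * b j)) :
    IsPartialAction k H lam := by
  refine ⟨h_one, fun h y => ?_⟩
  have hB : (LinearMap.mul k k).compl₁₂ lam lam =
      ((LinearMap.mul k H).compl₁₂ (lCont k H lam) LinearMap.id).compr₂ lam :=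
    LinearMap.ext_basis b b (by simpa using h_basis)
  simpa using DFunLike.congr_fun (DFunLike.congr_fun hB h) y

end lCont

namespace TaftData

variable {k H : Type*} [Field k] [Ring H] [HopfAlgebra k H] {n : ℕ} {q : k}
  (T : TaftData k n q H)

lemma isGroupLikeElem_g : IsGroupLikeElem k T.g := ⟨T.counit_g, T.comul_g⟩

lemma x_mul_g_pow (s : ℕ) : T.x * T.g ^ s = q ^ s • (T.g ^ s * T.x) := by
  induction s with
  | zero => simp
  | succ s ih =>
    rw [pow_succ, ← mul_assoc, ih, smul_mul_assoc, mul_assoc, T.x_mul_g,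
      mul_smul_comm, ← mul_assoc, smul_smul, ← pow_succ]

lemma x_pow_mul_g_pow (j s : ℕ) : T.x ^ j * T.g ^ s = q ^ (j * s) • (T.g ^ s * T.x ^ j) := by
  induction j with
  | zero => simp
  | succ j ih =>
    rw [pow_succ, mul_assoc, x_mul_g_pow, mul_smul_comm, ← mul_assoc, ih,
      smul_mul_assoc, smul_smul, mul_assoc, ← pow_succ, ← pow_add]
    ring_nf

lemma gx_mul_gx (i j s t : ℕ) :
    T.g ^ i * T.x ^ j * (T.g ^ s * T.x ^ t) = q ^ (j * s) • (T.g ^ (i + s) * T.x ^ (j + t)) := by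
  rw [mul_assoc, ← mul_assoc (T.x ^ j), T.x_pow_mul_g_pow j s, smul_mul_assoc,
    mul_smul_comm, mul_assoc, ← pow_add, ← mul_assoc, ← pow_add]

lemma g_pow_mod (m : ℕ) : T.g ^ m = T.g ^ (m % n) := by
  conv_lhs => rw [← Nat.div_add_mod m n, pow_add, pow_mul, T.g_pow_n, one_pow, one_mul]

lemma x_pow_eq_zero {r : ℕ} (hr : n ≤ r) : T.x ^ r = 0 := by
  rw [← Nat.add_sub_cancel' hr, pow_add, T.x_pow_n, zero_mul]

lemma lCont_mul_x_pow {μ : H →ₗ[k] k} (hμ : ∀ u, μ (u * T.x) = 0) (h : H) (j : ℕ) :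
    lCont k H μ (h * T.x ^ j) =
      lCont k H (μ ∘ₗ LinearMap.mulRight k (T.g ^ j)) h * T.x ^ j := by
  induction j generalizing μ with
  | zero => simp
  | succ j ih =>
    -- `x g = q g x`, so `μ (· * g)` again vanishes on `H x`
    have hμg : ∀ u, (μ ∘ₗ LinearMap.mulRight k T.g) (u * T.x) = 0 := fun u => by
      rw [LinearMap.comp_apply, LinearMap.mulRight_apply, mul_assoc, T.x_mul_g, mul_smul_comm,
        map_smul, ← mul_assoc, hμ, smul_zero]
    rw [pow_succ, ← mul_assoc, lCont_mul_of_comul_eq T.comul_x hμ, ih hμg, mul_assoc]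
    congr 3
    ext u
    simp [pow_succ, mul_assoc]

lemma lCont_gx {μ : H →ₗ[k] k} (hμ : ∀ u, μ (u * T.x) = 0) (i j : ℕ) :
    lCont k H μ (T.g ^ i * T.x ^ j) = μ (T.g ^ (i + j)) • (T.g ^ i * T.x ^ j) := by
  rw [T.lCont_mul_x_pow hμ, lCont_of_isGroupLikeElem _ T.isGroupLikeElem_g.pow, smul_mul_assoc]
  simp [pow_add]

variable {a : ℕ} {lam : H →ₗ[k] k}

lemma apply_gx_eq_ite (hn : 0 < n) (ha : a ∣ n)
    (hlam : ∀ i j : ℕ, i ≤ n - 1 → j ≤ n - 1 →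
      lam (T.g ^ i * T.x ^ j) = if j = 0 ∧ a ∣ i then 1 else 0)
    (m r : ℕ) : lam (T.g ^ m * T.x ^ r) = if r = 0 ∧ a ∣ m then 1 else 0 := by
  rcases lt_or_ge r n with hr | hr
  · rw [T.g_pow_mod, hlam _ _ (by have := Nat.mod_lt m hn; omega) (by omega)]
    simp only [Nat.dvd_mod_iff ha]
  · rw [T.x_pow_eq_zero hr, mul_zero, map_zero, if_neg (by omega)]

lemma apply_mul_x_eq_zero
    (hlam : ∀ m r : ℕ, lam (T.g ^ m * T.x ^ r) = if r = 0 ∧ a ∣ m then 1 else 0) (u : H) :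
    lam (u * T.x) = 0 := by
  have : lam ∘ₗ LinearMap.mulRight k T.x = 0 := T.basis.ext fun ⟨i, j⟩ => by
    simp [T.basis_eq, mul_assoc, ← pow_succ, hlam]
  exact LinearMap.congr_fun this u

lemma apply_gx_mul_apply_gx
    (hlam : ∀ m r : ℕ, lam (T.g ^ m * T.x ^ r) = if r = 0 ∧ a ∣ m then 1 else 0)
    (i j s t : ℕ) :
    lam (T.g ^ i * T.x ^ j) * lam (T.g ^ s * T.x ^ t) =
      lam (lCont k H lam (T.g ^ i * T.x ^ j) * (T.g ^ s * T.x ^ t)) := by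
  rw [T.lCont_gx (T.apply_mul_x_eq_zero hlam), smul_mul_assoc, T.gx_mul_gx, map_smul, map_smul,
    hlam, hlam, hlam]
  by_cases hjt : j = 0 ∧ t = 0
  · obtain ⟨rfl, rfl⟩ := hjt
    have hg : lam (T.g ^ i) = if a ∣ i then 1 else 0 := by simpa using hlam i 0
    by_cases hi : a ∣ i <;> simp [hg, hi, Nat.dvd_add_right]
  · have hjt : j + t ≠ 0 := by omega
    simp only [hjt, false_and, if_false, smul_zero, mul_eq_zero, ite_eq_right_iff]
    omega

end TaftData

theorem prop_3_1_5_general {k H : Type*} [Field k] [Ring H] [HopfAlgebra k H]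
    {n : ℕ} (hn : 2 ≤ n) {q : k}
    (T : TaftData k n q H) (a : ℕ) (ha : a ∣ n) (lam : H →ₗ[k] k)
    (hlam : ∀ i j : ℕ, i ≤ n - 1 → j ≤ n - 1 →
      lam (T.g ^ i * T.x ^ j) = if j = 0 ∧ a ∣ i then 1 else 0) :
    IsPartialAction k H lam := by
  have hlam' := T.apply_gx_eq_ite (by omega) ha hlam
  refine IsPartialAction.of_basis T.basis (by simpa using hlam' 0 0) ?_
  rintro ⟨i, j⟩ ⟨s, t⟩
  simpa only [T.basis_eq] using T.apply_gx_mul_apply_gx hlam' i j s t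

/-- Proposition 3.1.5: for every subgroup `N` of the cyclic group `⟨g⟩ ≅ C_n` of group-like
elements of the Taft algebra `T_n(q)`, the linear map `λ_N^0 : T_n(q) → k` given on the
canonical basis by `λ_N^0(g^i x^j) = 1` if `j = 0` and `g^i ∈ N`, and `0` otherwise, is a
partial action of `T_n(q)` on `k`.  (The subgroups of `⟨g⟩ ≅ C_n` are exactly the subgroups
`N = ⟨g^a⟩` for divisors `a` of `n`, and for `0 ≤ i ≤ n−1` one has `g^i ∈ ⟨g^a⟩ ↔ a ∣ i`.) -/
theorem prop_3_1_5 {k H : Type*} [Field k] [Ring H] [HopfAlgebra k H]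
    {n : ℕ} (hn : 2 ≤ n) {q : k} (hq : IsPrimitiveRoot q n)
    (T : TaftData k n q H) (a : ℕ) (ha : a ∣ n) (lam : H →ₗ[k] k)
    (hlam : ∀ i j : ℕ, i ≤ n - 1 → j ≤ n - 1 →
      lam (T.g ^ i * T.x ^ j) = if j = 0 ∧ a ∣ i then 1 else 0) :
    IsPartialAction k H lam :=
  prop_3_1_5_general hn T a ha lam hlam
end

section
/- The linear map ψ : T_n(q) → (T_n(q))* defined on the canonical basis by ψ(g^i x^j) = Σ_{k=0}^{n−1} (j)_q! · q^{−i(k+j) − jk − j(j−1)/2} · (g^k x^j)* is an isomorphism of Hopf algebras; concretely, ψ is bijective with inverse φ given by φ((g^i x^j)*) = (1/n)·((j)_q!)^{−1}·q^{ij + j(j−1)/2}·Σ_{k=0}^{n−1} q^{k(i+j)} g^k x^j, ψ(hh') = ψ(h) * ψ(h') (convolution product) and ψ(1) = ε for all h, h' ∈ T_n(q), and for all h, c, c' ∈ T_n(q) one has ψ(h)(cc') = Σ ψ(h₁)(c)·ψ(h₂)(c') and ψ(h)(1) = ε(h). (Lemma 3.2.1) -/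
open scoped TensorProduct

/-- The convolution product on the dual `H* = H →ₗ[k] k` of a coalgebra:
`(f * f')(c) = Σ f(c₁) f'(c₂)`. -/
noncomputable def conv (k H : Type*) [CommSemiring k] [Semiring H] [Bialgebra k H]
    (f f' : H →ₗ[k] k) : H →ₗ[k] k :=
  LinearMap.mul' k k ∘ₗ TensorProduct.map f f' ∘ₗ Coalgebra.comul

/-!
Write `⟨h, c⟩ := ψ h c`. On monomials,
`⟨g^i x^j, g^a x^b⟩ = δ_{jb} (j)_q! q^{-(ia+ij+ja) - j(j-1)/2}` for all natural `i, j, a, b`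
(use `q^n = 1`, and `(j)_q! = 0 = x^j` for `j ≥ n`). This pairing is symmetric under
`(i,j) ↔ (a,b)`, so the compatibility of `ψ` with the coproduct and the counit of the second
argument is the multiplicativity and unitality of `ψ` read in the other variable.
Multiplicativity on monomials is the q-binomial expansion of `Δ(g^s x^c)` together with
`binom(j+b, b)_q (j)_q! (b)_q! = (j+b)_q!`. Finally `ψ ∘ φ = id` is the orthogonality
`Σ_m q^{m(i-a)} = n δ_{ia}` of the characters of `ℤ/n`, and `φ ∘ ψ = id` follows because `H`
and `H*` have the same finite dimension.
-/

open Finset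

section QCombinatorics
variable {k : Type*} [Field k] (q : k)

theorem qbinom_succ_succ (m b : ℕ) :
    qbinom q (m + 1) (b + 1 : ℕ) = qbinom q m b + q ^ (b + 1) * qbinom q m (b + 1 : ℕ) := by
  simp [qbinom]

theorem qbinom_of_neg : ∀ (m : ℕ) {s : ℤ}, s < 0 → qbinom q m s = 0
  | 0, s, hs => by simp [qbinom, hs.ne]
  | m + 1, s, hs => by simp [qbinom, qbinom_of_neg m (s := s - 1) (by omega), qbinom_of_neg m hs]

theorem qbinom_of_lt : ∀ (m : ℕ) {s : ℤ}, (m : ℤ) < s → qbinom q m s = 0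
  | 0, s, hs => if_neg (by omega)
  | m + 1, s, hs => by
    simp [qbinom, qbinom_of_lt m (s := s - 1) (by omega), qbinom_of_lt m (s := s) (by omega)]

theorem qbinom_zero_right : ∀ m : ℕ, qbinom q m 0 = 1
  | 0 => by simp [qbinom]
  | m + 1 => by simp [qbinom, qbinom_of_neg q m (s := -1) (by omega), qbinom_zero_right m]

theorem qbinom_self : ∀ m : ℕ, qbinom q m m = 1
  | 0 => by simp [qbinom]
  | m + 1 => by
    rw [qbinom_succ_succ, qbinom_self m, qbinom_of_lt q m (by omega), mul_zero, add_zero]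

theorem qnum_add (a b : ℕ) : qnum q (a + b) = qnum q a + q ^ a * qnum q b := by
  simp only [qnum, sum_range_add, pow_add, mul_sum]

theorem qbinom_mul_qfact_mul_qfact :
    ∀ a b : ℕ, qbinom q (a + b) b * qfact q a * qfact q b = qfact q (a + b)
  | 0, b => by simp [qbinom_self, qfact]
  | a + 1, 0 => by simp [qbinom_zero_right, qfact]
  | a + 1, b + 1 => by
    have h₁ := qbinom_mul_qfact_mul_qfact (a + 1) b
    have h₂ := qbinom_mul_qfact_mul_qfact a (b + 1)
    have hnum := qnum_add q (b + 1) (a + 1)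
    rw [show a + (b + 1) = a + 1 + b by omega] at h₂
    rw [show a + 1 + (b + 1) = a + 1 + b + 1 by omega, qbinom_succ_succ]
    simp only [qfact] at h₁ h₂ ⊢
    rw [show a + 1 + b + 1 = b + 1 + (a + 1) by omega, hnum]
    linear_combination qnum q (b + 1) * h₁ + q ^ (b + 1) * qnum q (a + 1) * h₂

end QCombinatorics

section QBinomial
variable {k R : Type*} [Field k] [Ring R] [Algebra k R] {q : k} {A B : R}

theorem mul_pow_of_mul_eq_smul (h : B * A = q • (A * B)) : ∀ ℓ : ℕ, B * A ^ ℓ = q ^ ℓ • (A ^ ℓ * B)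
  | 0 => by simp
  | ℓ + 1 => by
    rw [pow_succ', ← mul_assoc, h, smul_mul_assoc, mul_assoc, mul_pow_of_mul_eq_smul h ℓ,
      mul_smul_comm, smul_smul, ← mul_assoc, ← pow_succ', ← pow_succ']

theorem pow_mul_pow_of_mul_eq_smul (h : B * A = q • (A * B)) (a : ℕ) :
    ∀ b : ℕ, B ^ b * A ^ a = q ^ (a * b) • (A ^ a * B ^ b)
  | 0 => by simp
  | b + 1 => by
    rw [pow_succ, mul_assoc, mul_pow_of_mul_eq_smul h, mul_smul_comm, ← mul_assoc,
      pow_mul_pow_of_mul_eq_smul h a b, smul_mul_assoc, smul_smul, mul_assoc, ← pow_succ,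
      ← pow_add, mul_add_one, add_comm a]

theorem add_pow_eq_sum_qbinom (h : B * A = q • (A * B)) :
    ∀ m : ℕ, (A + B) ^ m = ∑ ℓ ∈ range (m + 1), qbinom q m ℓ • (A ^ ℓ * B ^ (m - ℓ))
  | 0 => by simp [qbinom]
  | m + 1 => by
    have hstep : ∀ ℓ ≤ m, (A + B) * (A ^ ℓ * B ^ (m - ℓ))
        = A ^ (ℓ + 1) * B ^ (m - ℓ) + q ^ ℓ • (A ^ ℓ * B ^ (m + 1 - ℓ)) := fun ℓ hℓ => by
      rw [add_mul, ← mul_assoc, ← pow_succ', ← mul_assoc, mul_pow_of_mul_eq_smul h,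
        smul_mul_assoc, mul_assoc, ← pow_succ', Nat.sub_add_comm hℓ]
    have hlow : ∑ ℓ ∈ range (m + 2), qbinom q m ((ℓ : ℤ) - 1) • (A ^ ℓ * B ^ (m + 1 - ℓ))
        = ∑ ℓ ∈ range (m + 1), qbinom q m ℓ • (A ^ (ℓ + 1) * B ^ (m - ℓ)) := by
      simp [sum_range_succ' _ (m + 1), qbinom_of_neg q m (s := -1) (by omega)]
    have hhigh : ∑ ℓ ∈ range (m + 2), (q ^ ℓ * qbinom q m ℓ) • (A ^ ℓ * B ^ (m + 1 - ℓ))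
        = ∑ ℓ ∈ range (m + 1), (q ^ ℓ * qbinom q m ℓ) • (A ^ ℓ * B ^ (m + 1 - ℓ)) := by
      rw [sum_range_succ _ (m + 1), Nat.cast_succ, qbinom_of_lt q m (by omega), mul_zero,
        zero_smul, add_zero]
    calc (A + B) ^ (m + 1)
        = ∑ ℓ ∈ range (m + 1), qbinom q m ℓ • ((A + B) * (A ^ ℓ * B ^ (m - ℓ))) := by
          rw [pow_succ', add_pow_eq_sum_qbinom h m, mul_sum]
          simp only [mul_smul_comm]
      _ = ∑ ℓ ∈ range (m + 1), qbinom q m ℓ • (A ^ (ℓ + 1) * B ^ (m - ℓ))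
          + ∑ ℓ ∈ range (m + 1), (q ^ ℓ * qbinom q m ℓ) • (A ^ ℓ * B ^ (m + 1 - ℓ)) := by
          rw [← sum_add_distrib]
          refine sum_congr rfl fun ℓ hℓ => ?_
          rw [hstep ℓ (by simpa [Nat.lt_succ_iff] using hℓ), smul_add, smul_smul, mul_comm]
      _ = ∑ ℓ ∈ range (m + 2), qbinom q (m + 1) ℓ • (A ^ ℓ * B ^ (m + 1 - ℓ)) := by
          rw [← hlow, ← hhigh, ← sum_add_distrib]
          refine sum_congr rfl fun ℓ _ => ?_
          rw [← add_smul]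
          simp [qbinom]

end QBinomial

section Convolution
variable {k H : Type*} [CommSemiring k] [Semiring H] [Bialgebra k H]

noncomputable def convBilin : (H →ₗ[k] k) →ₗ[k] (H →ₗ[k] k) →ₗ[k] (H →ₗ[k] k) :=
  (TensorProduct.mapBilinear (RingHom.id k) H H k k).compr₂
    (LinearMap.lcomp k k Coalgebra.comul ∘ₗ LinearMap.compRight k (LinearMap.mul' k k))

theorem map_mul_eq_conv_of_basis {ι : Type*} (b : Module.Basis ι k H) (ψ : H →ₗ[k] H →ₗ[k] k)
    (h : ∀ i j, ψ (b i * b j) = conv k H (ψ (b i)) (ψ (b j))) (x y : H) :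
    ψ (x * y) = conv k H (ψ x) (ψ y) :=
  LinearMap.congr_fun₂ (LinearMap.ext_basis b b
    (B := (LinearMap.mul k H).compr₂ ψ) (B' := (convBilin ∘ₗ ψ).compl₂ ψ) h) x y

end Convolution

theorem LinearMap.leftInverse_of_rightInverse_of_finrank_eq {K V W : Type*} [Field K]
    [AddCommGroup V] [Module K V] [AddCommGroup W] [Module K W]
    [FiniteDimensional K V] [FiniteDimensional K W] (hdim : Module.finrank K V = Module.finrank K W)
    {f : V →ₗ[K] W} {g : W →ₗ[K] V} (h : Function.RightInverse g f) : Function.LeftInverse g f :=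
  fun v => ((injective_iff_surjective_of_finrank_eq_finrank hdim).mpr h.surjective)
    (h (f v))

theorem Nat.add_mul_add_sub_one_div_two (j b : ℕ) :
    (j + b) * (j + b - 1) / 2 = j * (j - 1) / 2 + b * (b - 1) / 2 + j * b := by
  simp only [← Nat.choose_two_right]
  have h : (((j + b).choose 2 : ℕ) : ℚ) = (j.choose 2 : ℕ) + (b.choose 2 : ℕ) + j * b := by
    simp only [Nat.cast_choose_two]
    push_cast
    ring
  exact_mod_cast h

def taftExp (i j a : ℕ) : ℤ :=
  -((i * (a + j) : ℕ) : ℤ) - ((j * a : ℕ) : ℤ) - ((j * (j - 1) / 2 : ℕ) : ℤ)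

theorem taftExp_comm (i j a : ℕ) : taftExp i j a = taftExp a j i := by
  unfold taftExp
  push_cast
  ring

theorem taftExp_add (i j a b s : ℕ) :
    ((a * j : ℕ) : ℤ) + taftExp (i + a) (j + b) s = taftExp i j (s + b) + taftExp a b s := by
  unfold taftExp
  rw [Nat.add_mul_add_sub_one_div_two]
  push_cast
  ring

theorem taftExp_add_mul (n i j a t u : ℕ) :
    taftExp (i + n * t) j (a + n * u)
      = taftExp i j a + n * -(t * (a + j) + u * (i + j) + n * t * u) := by
  unfold taftExp
  push_cast
  ring

section Pairing
variable {k : Type*} [Field k]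

def taftPairing (q : k) (i j a b : ℕ) : k :=
  if b = j then qfact q j * q ^ taftExp i j a else 0

theorem taftPairing_comm (q : k) (i j a b : ℕ) : taftPairing q i j a b = taftPairing q a b i j := by
  unfold taftPairing
  by_cases h : b = j
  · subst h
    rw [taftExp_comm]
  · rw [if_neg h, if_neg (Ne.symm h)]

theorem taftPairing_mul {q : k} (hq : q ≠ 0) (i j a b s c : ℕ) :
    q ^ (a * j) * taftPairing q (i + a) (j + b) s c = ∑ ℓ ∈ range (c + 1),
      qbinom q c ℓ * (taftPairing q i j (s + ℓ) (c - ℓ) * taftPairing q a b s ℓ) := by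
  by_cases hc : c = j + b
  · subst hc
    rw [sum_eq_single_of_mem b (by simp) fun ℓ _ hℓ => by simp [taftPairing, hℓ]]
    simp only [taftPairing, if_true, Nat.add_sub_cancel]
    rw [← qbinom_mul_qfact_mul_qfact q j b, ← zpow_natCast, mul_mul_mul_comm,
      ← zpow_add₀ hq (taftExp i j _), ← taftExp_add, zpow_add₀ hq]
    ring
  · rw [taftPairing, if_neg hc, mul_zero, eq_comm]
    refine sum_eq_zero fun ℓ hℓ => ?_
    have : ℓ ≤ c := Nat.lt_succ_iff.mp (mem_range.mp hℓ)
    simp only [taftPairing]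
    split_ifs <;> first | omega | simp

end Pairing

namespace IsPrimitiveRoot
variable {k : Type*} [Field k] {n : ℕ} {q : k}

theorem qnum_ne_zero (hq : IsPrimitiveRoot q n) {m : ℕ} (hm₀ : 0 < m) (hm : m < n) :
    qnum q m ≠ 0 := by
  rw [qnum, geom_sum_eq (hq.ne_one (by omega))]
  exact div_ne_zero (sub_ne_zero.mpr (hq.pow_ne_one_of_pos_of_lt hm₀.ne' hm))
    (sub_ne_zero.mpr (hq.ne_one (by omega)))

theorem qfact_ne_zero (hq : IsPrimitiveRoot q n) : ∀ {m : ℕ}, m < n → qfact q m ≠ 0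
  | 0, _ => one_ne_zero
  | m + 1, hm => mul_ne_zero (hq.qnum_ne_zero m.succ_pos hm) (hq.qfact_ne_zero (by omega))

theorem qfact_eq_zero (hq : IsPrimitiveRoot q n) (hn : 1 < n) {m : ℕ} (hm : n ≤ m) :
    qfact q m = 0 := by
  induction m, hm using Nat.le_induction with
  | base =>
    obtain ⟨p, rfl⟩ : ∃ p, n = p + 1 := ⟨n - 1, by omega⟩
    exact mul_eq_zero_of_left (hq.geom_sum_eq_zero hn) _
  | succ m _ ih => exact mul_eq_zero_of_right _ ih

theorem zpow_taftExp_mod (hq : IsPrimitiveRoot q n) (hn : n ≠ 0) (i j a : ℕ) :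
    q ^ taftExp (i % n) j (a % n) = q ^ taftExp i j a := by
  conv_rhs => rw [← Nat.mod_add_div i n, ← Nat.mod_add_div a n]
  rw [taftExp_add_mul, zpow_add₀ (hq.ne_zero hn), zpow_mul, hq.zpow_eq_one, one_zpow, mul_one]

theorem sum_zpow_mul_sub (hq : IsPrimitiveRoot q n) (i a : Fin n) :
    ∑ m : Fin n, q ^ (((m : ℕ) : ℤ) * ((i : ℕ) - (a : ℕ) : ℤ)) = if i = a then (n : k) else 0 := by
  rw [Fin.sum_univ_eq_sum_range (fun m => q ^ ((m : ℤ) * ((i : ℕ) - (a : ℕ) : ℤ)))]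
  split_ifs with h
  · simp [h]
  · have hζ : q ^ ((i : ℕ) - (a : ℕ) : ℤ) ≠ 1 := by
      rw [Ne, hq.zpow_eq_one_iff_dvd]
      intro hdvd
      have := Int.eq_zero_of_abs_lt_dvd hdvd (by rw [abs_lt]; omega)
      exact h (Fin.ext (by omega))
    have hζn : (q ^ ((i : ℕ) - (a : ℕ) : ℤ)) ^ n = 1 := by
      rw [← zpow_natCast, ← zpow_mul, mul_comm, zpow_mul, hq.zpow_eq_one, one_zpow]
    simp_rw [mul_comm ((_ : ℕ) : ℤ), zpow_mul, zpow_natCast]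
    rw [geom_sum_eq hζ, hζn, sub_self, zero_div]

theorem sum_pow_mul_taftPairing (hq : IsPrimitiveRoot q n) (i j a : Fin n) (b : ℕ) :
    (n : k)⁻¹ * (qfact q j)⁻¹ * q ^ ((i : ℕ) * (j : ℕ) + (j : ℕ) * ((j : ℕ) - 1) / 2) *
      ∑ m : Fin n, q ^ ((m : ℕ) * ((i : ℕ) + (j : ℕ))) * taftPairing q m j a b
      = if a = i ∧ b = j then 1 else 0 := by
  have hn : n ≠ 0 := i.pos.ne'
  have : NeZero n := ⟨hn⟩
  by_cases hb : b = j
  · have hterm   : ∀ m : Fin n,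
        q ^ ((i : ℕ) * (j : ℕ) + (j : ℕ) * ((j : ℕ) - 1) / 2) *
          (q ^ ((m : ℕ) * ((i : ℕ) + (j : ℕ))) * q ^ taftExp m j a)
        = q ^ (((j : ℕ) : ℤ) * ((i : ℕ) - (a : ℕ) : ℤ)) *
          q ^ (((m : ℕ) : ℤ) * ((i : ℕ) - (a : ℕ) : ℤ)) := fun m => by
      simp only [← zpow_natCast, ← zpow_add₀ (hq.ne_zero hn)]
      congr 1
      unfold taftExp
      push_cast
      ring
    calc (n : k)⁻¹ * (qfact q j)⁻¹ * q ^ ((i : ℕ) * (j : ℕ) + (j : ℕ) * ((j : ℕ) - 1) / 2) *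
          ∑ m : Fin n, q ^ ((m : ℕ) * ((i : ℕ) + (j : ℕ))) * taftPairing q m j a b
        = (n : k)⁻¹ * ((qfact q j)⁻¹ * qfact q j) * q ^ (((j : ℕ) : ℤ) * ((i : ℕ) - (a : ℕ) : ℤ)) *
          ∑ m : Fin n, q ^ (((m : ℕ) : ℤ) * ((i : ℕ) - (a : ℕ) : ℤ)) := by
          simp only [taftPairing, hb, if_true, mul_sum]
          refine sum_congr rfl fun m _ => ?_
          linear_combination (n : k)⁻¹ * ((qfact q j)⁻¹ * qfact q j) * hterm m
      _ = if a = i ∧ b = j then 1 else 0 := by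
          rw [inv_mul_cancel₀ (hq.qfact_ne_zero j.isLt), hq.sum_zpow_mul_sub]
          by_cases hai : a = i
          · simp [hai, hb, hq.neZero'.out]
          · simp [hai, Ne.symm hai]
  · simp [taftPairing, hb]

end IsPrimitiveRoot

namespace TaftData
variable {k H : Type*} [Field k] [Ring H] [HopfAlgebra k H] {n : ℕ} {q : k}
  (T : TaftData k n q H) {ψ : H →ₗ[k] H →ₗ[k] k}

theorem g_pow_mul_x_pow_mul_g_pow_mul_x_pow (i j a b : ℕ) :
    T.g ^ i * T.x ^ j * (T.g ^ a * T.x ^ b) = q ^ (a * j) • (T.g ^ (i + a) * T.x ^ (j + b)) := by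
  rw [mul_assoc, ← mul_assoc (T.x ^ j), pow_mul_pow_of_mul_eq_smul T.x_mul_g, smul_mul_assoc,
    mul_smul_comm, mul_assoc, ← mul_assoc, ← pow_add, ← pow_add]

theorem comul_g_pow_mul_x_pow (i j : ℕ) :
    Coalgebra.comul (R := k) (T.g ^ i * T.x ^ j) = ∑ ℓ ∈ range (j + 1),
      qbinom q j ℓ • ((T.g ^ (i + ℓ) * T.x ^ (j - ℓ)) ⊗ₜ[k] (T.g ^ i * T.x ^ ℓ)) := by
  have hqcomm : T.x ⊗ₜ[k] (1 : H) * T.g ⊗ₜ[k] T.x = q • (T.g ⊗ₜ[k] T.x * T.x ⊗ₜ[k] (1 : H)) := by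
    simp only [Algebra.TensorProduct.tmul_mul_tmul, T.x_mul_g, one_mul, mul_one,
      TensorProduct.smul_tmul']
  rw [Bialgebra.comul_mul, Bialgebra.comul_pow, Bialgebra.comul_pow, T.comul_g, T.comul_x,
    add_comm, add_pow_eq_sum_qbinom hqcomm, mul_sum]
  refine sum_congr rfl fun ℓ _ => ?_
  simp only [mul_smul_comm, Algebra.TensorProduct.tmul_pow, Algebra.TensorProduct.tmul_mul_tmul,
    one_pow, mul_one, ← mul_assoc, ← pow_add]

theorem counit_g_pow_mul_x_pow (a b : ℕ) :
    Coalgebra.counit (R := k) (T.g ^ a * T.x ^ b) = if b = 0 then 1 else 0 := by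
  cases b <;> simp [T.counit_g, T.counit_x]

theorem conv_apply_g_pow_mul_x_pow (f f' : H →ₗ[k] k) (s c : ℕ) :
    conv k H f f' (T.g ^ s * T.x ^ c) = ∑ ℓ ∈ range (c + 1),
      qbinom q c ℓ * (f (T.g ^ (s + ℓ) * T.x ^ (c - ℓ)) * f' (T.g ^ s * T.x ^ ℓ)) := by
  simp [conv, T.comul_g_pow_mul_x_pow]

theorem coord_g_pow_mul_x_pow (m j : Fin n) (a b : ℕ) :
    T.basis.coord (m, j) (T.g ^ a * T.x ^ b) = if a % n = m ∧ b = j then 1 else 0 := by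
  rcases lt_or_ge b n with hb | hb
  · have hbasis : T.g ^ a * T.x ^ b = T.basis (⟨a % n, Nat.mod_lt a m.pos⟩, ⟨b, hb⟩) := by
      rw [T.basis_eq, ← pow_eq_pow_mod a T.g_pow_n]
    simp [hbasis, Finsupp.single_apply, Prod.ext_iff, Fin.ext_iff, eq_comm]
  · rw [pow_eq_zero_of_le hb T.x_pow_n, mul_zero, map_zero, if_neg]
    omega

def IsPairing (ψ : H →ₗ[k] H →ₗ[k] k) : Prop :=
  ∀ i j a b : ℕ, ψ (T.g ^ i * T.x ^ j) (T.g ^ a * T.x ^ b) = taftPairing q i j a b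

theorem isPairing (hn : 1 < n) (hq : IsPrimitiveRoot q n)
    (hψ : ∀ i j : Fin n, ψ (T.g ^ (i : ℕ) * T.x ^ (j : ℕ)) =
      ∑ m : Fin n, (qfact q j * q ^ taftExp i j m) • T.basis.coord (m, j)) :
    T.IsPairing ψ := by
  intro i j a b
  rcases lt_or_ge j n with hj | hj
  · have ha : a % n < n := Nat.mod_lt a (by omega)
    rw [pow_eq_pow_mod i T.g_pow_n,
      hψ ⟨i % n, Nat.mod_lt i (by omega)⟩ ⟨j, hj⟩, LinearMap.sum_apply,
      Fintype.sum_eq_single ⟨a % n, ha⟩ fun m hm => by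
        simp [T.coord_g_pow_mul_x_pow, Ne.symm (Fin.val_ne_of_ne hm)]]
    simp only [LinearMap.smul_apply, T.coord_g_pow_mul_x_pow, smul_eq_mul, true_and,
      hq.zpow_taftExp_mod (by omega), taftPairing]
    split_ifs <;> simp
  · rw [pow_eq_zero_of_le hj T.x_pow_n, mul_zero, map_zero, LinearMap.zero_apply, taftPairing,
      hq.qfact_eq_zero hn hj, zero_mul, ite_self]

namespace IsPairing
variable {T}

theorem flip_eq (hψ : T.IsPairing ψ) : ψ.flip = ψ :=
  LinearMap.ext_basis T.basis T.basis fun ⟨i, j⟩ ⟨a, b⟩ => by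
    simp only [T.basis_eq, LinearMap.flip_apply, hψ _, taftPairing_comm]

theorem map_mul (hψ : T.IsPairing ψ) (hq : q ≠ 0) (h h' : H) :
    ψ (h * h') = conv k H (ψ h) (ψ h') :=
  map_mul_eq_conv_of_basis T.basis ψ (fun ⟨i, j⟩ ⟨a, b⟩ => T.basis.ext fun ⟨s, c⟩ => by
    simp only [T.basis_eq, T.g_pow_mul_x_pow_mul_g_pow_mul_x_pow, map_smul, LinearMap.smul_apply,
      smul_eq_mul, hψ _, T.conv_apply_g_pow_mul_x_pow, taftPairing_mul hq]) h h'

theorem map_one (hψ : T.IsPairing ψ) : ψ 1 = Coalgebra.counit (R := k) :=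
  T.basis.ext fun ⟨a, b⟩ => by
    rw [T.basis_eq, show (1 : H) = T.g ^ 0 * T.x ^ 0 by simp, hψ,
      T.counit_g_pow_mul_x_pow]
    simp [taftPairing, taftExp, qfact]

theorem rightInverse (hψ : T.IsPairing ψ) (hq : IsPrimitiveRoot q n)
    {φ : (H →ₗ[k] k) →ₗ[k] H} (hφ : ∀ i j : Fin n, φ (T.basis.coord (i, j)) =
      ((n : k)⁻¹ * (qfact q (j : ℕ))⁻¹ * q ^ ((i : ℕ) * (j : ℕ) + (j : ℕ) * ((j : ℕ) - 1) / 2)) •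
        ∑ m : Fin n, q ^ ((m : ℕ) * ((i : ℕ) + (j : ℕ))) • (T.g ^ (m : ℕ) * T.x ^ (j : ℕ))) :
    Function.RightInverse φ ψ := by
  suffices ψ ∘ₗ φ = LinearMap.id from LinearMap.congr_fun this
  refine T.basis.dualBasis.ext fun ⟨i, j⟩ => T.basis.ext fun ⟨a, b⟩ => ?_
  simp only [Module.Basis.coe_dualBasis, LinearMap.comp_apply, LinearMap.id_apply, hφ, map_smul,
    map_sum, LinearMap.smul_apply, LinearMap.sum_apply, T.basis_eq, hψ _, smul_eq_mul]
  rw [hq.sum_pow_mul_taftPairing, T.coord_g_pow_mul_x_pow, Nat.mod_eq_of_lt a.isLt]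
  simp only [Fin.ext_iff]

end IsPairing
end TaftData

/-- Lemma 3.2.1: the linear map `ψ : T_n(q) → (T_n(q))*` defined on the canonical basis by
`ψ(g^i x^j) = Σ_{m=0}^{n−1} (j)_q! · q^{−i(m+j) − jm − j(j−1)/2} · (g^m x^j)*` is an
isomorphism of Hopf algebras: `ψ` is bijective with inverse `φ` given by
`φ((g^i x^j)*) = (1/n)·((j)_q!)⁻¹·q^{ij + j(j−1)/2}·Σ_{m=0}^{n−1} q^{m(i+j)} g^m x^j`,
`ψ(h h') = ψ(h) * ψ(h')` (convolution product) and `ψ(1) = ε`, and for all `h, c, c'` one has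
`ψ(h)(c c') = Σ ψ(h₁)(c)·ψ(h₂)(c')` and `ψ(h)(1) = ε(h)`.
Here `(g^m x^j)*` is the dual basis functional `T.basis.coord (m, j)`. -/
theorem lemma_3_2_1 {k H : Type*} [Field k] [Ring H] [HopfAlgebra k H]
    {n : ℕ} (hn : 2 ≤ n) {q : k} (hq : IsPrimitiveRoot q n)
    (T : TaftData k n q H)
    (ψ : H →ₗ[k] (H →ₗ[k] k)) (φ : (H →ₗ[k] k) →ₗ[k] H)
    (hψ : ∀ i j : Fin n, ψ (T.g ^ (i : ℕ) * T.x ^ (j : ℕ)) =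
      ∑ m : Fin n,
        (qfact q (j : ℕ) *
          q ^ (-(((i : ℕ) * ((m : ℕ) + (j : ℕ)) : ℕ) : ℤ) - (((j : ℕ) * (m : ℕ) : ℕ) : ℤ)
            - ((((j : ℕ) * ((j : ℕ) - 1) / 2 : ℕ)) : ℤ))) • T.basis.coord (m, j))
    (hφ : ∀ i j : Fin n, φ (T.basis.coord (i, j)) =
      ((n : k)⁻¹ * (qfact q (j : ℕ))⁻¹ * q ^ ((i : ℕ) * (j : ℕ) + (j : ℕ) * ((j : ℕ) - 1) / 2)) •
        ∑ m : Fin n, q ^ ((m : ℕ) * ((i : ℕ) + (j : ℕ))) • (T.g ^ (m : ℕ) * T.x ^ (j : ℕ))) :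
    Function.Bijective ψ ∧
    (∀ f : H →ₗ[k] k, ψ (φ f) = f) ∧
    (∀ h : H, φ (ψ h) = h) ∧
    ψ 1 = Coalgebra.counit (R := k) ∧
    (∀ h h' : H, ψ (h * h') = conv k H (ψ h) (ψ h')) ∧
    (∀ h c c' : H, ψ h (c * c') = conv k H (ψ.flip c) (ψ.flip c') h) ∧
    (∀ h : H, ψ h 1 = Coalgebra.counit (R := k) h) := by
  have hpair : T.IsPairing ψ := T.isPairing hn hq hψ
  have hflip : ψ.flip = ψ := hpair.flip_eq
  have hmul := hpair.map_mul (hq.ne_zero (by omega))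
  have : FiniteDimensional k H := Module.Finite.of_basis T.basis
  have hright : Function.RightInverse φ ψ := hpair.rightInverse hq hφ
  have hleft : Function.LeftInverse φ ψ :=
    LinearMap.leftInverse_of_rightInverse_of_finrank_eq Subspace.dual_finrank_eq.symm hright
  refine ⟨⟨hleft.injective, hright.surjective⟩, hright, hleft, hpair.map_one, hmul,
    fun h c c' => ?_, fun h => ?_⟩
  · rw [hflip, ← hmul]
    exact LinearMap.congr_fun₂ hflip (c * c') h
  · rw [← hpair.map_one]
    exact LinearMap.congr_fun₂ hflip 1 h
end
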